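/- For any 0 ≤ t < T₀ ≤ T and μ ∈ 𝒫₀(𝕊), the raw set value satisfies the dynamic programming principle: V₀(t,μ) = { J(T₀,ψ;t,μ,α*;·,α*) : ψ: 𝕊×𝒫₀(𝕊) → ℝ and α* ∈ 𝒜_state such that ψ(·,μ^{α*}_{T₀}) ∈ V₀(T₀,μ^{α*}_{T₀}) and α* ∈ ℳ_state(T₀,ψ;t,μ) }. -/

import Mathlib

/-!
Statement 0 (Proposition 2.3, time consistency of state-dependent MFE).

Discrete-time finite-state mean field game.  Time set `𝕋 = {0,…,T}` (we use `ℕ` and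
restrict attention to times `≤ T`), finite state space `S`, control set `A`.
Probability measures on `S` are encoded as functions `S → ℝ` satisfying `IsProb`.
-/

open Finset

namespace MFGSetValue

variable {S A : Type*} [Fintype S] [DecidableEq S]

/-- A probability vector on the finite state space `S`. -/
def IsProb (μ : S → ℝ) : Prop := (∀ x, 0 ≤ μ x) ∧ ∑ x, μ x = 1

/-- The measure flow `μ^α` determined by `ℙ^{t,μ,α}`:
`μ^α_t = μ` and `μ^α_{s+1}(y) = ∑_x μ^α_s(x) q(s,x,μ^α_s,α(s,x);y)`.
(For `s < t` the value is irrelevant; we set it to `μ`.) -/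
noncomputable def flow (q : ℕ → S → (S → ℝ) → A → S → ℝ) (α : ℕ → S → A)
    (t : ℕ) (μ : S → ℝ) : ℕ → S → ℝ
  | 0 => μ
  | s + 1 =>
    if s + 1 ≤ t then μ
    else fun y => ∑ x, flow q α t μ s x * q s x (flow q α t μ s) (α s x) y

/-- The law at each time of the Markov chain `ℙ^{{ν_·}; t, x₀, α̃}` started from `x₀`
at time `t`, moving with transitions `q(s, ·, ν_s, α̃(s,·); ·)`. -/
noncomputable def chain (q : ℕ → S → (S → ℝ) → A → S → ℝ) (ν : ℕ → S → ℝ)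
    (αt : ℕ → S → A) (t : ℕ) (x₀ : S) : ℕ → S → ℝ
  | 0 => fun x => if x = x₀ then 1 else 0
  | s + 1 =>
    if s + 1 ≤ t then fun x => if x = x₀ then 1 else 0
    else fun y => ∑ x, chain q ν αt t x₀ s x * q s x (ν s) (αt s x) y

/-- The cost `J(T₀, ψ; {ν_·}; t, x₀, α̃)` with horizon `T₀`, terminal reward `ψ(X_{T₀}, ν_{T₀})`,
running cost `F`, against the measure flow `ν`:
`E[ψ(X_{T₀}, ν_{T₀}) + ∑_{s=t}^{T₀-1} F(s, X_s, ν_s, α̃(s,X_s))]`. -/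
noncomputable def cost (q : ℕ → S → (S → ℝ) → A → S → ℝ)
    (F : ℕ → S → (S → ℝ) → A → ℝ) (T₀ : ℕ) (ψ : S → (S → ℝ) → ℝ)
    (ν : ℕ → S → ℝ) (t : ℕ) (x₀ : S) (αt : ℕ → S → A) : ℝ :=
  (∑ x, chain q ν αt t x₀ T₀ x * ψ x (ν T₀)) +
    ∑ s ∈ Finset.Ico t T₀, ∑ x, chain q ν αt t x₀ s x * F s x (ν s) (αt s x)

/-- The value `v(T₀,ψ; {ν_·}; t, x₀) = inf_{α̃ ∈ 𝒜_state} J(T₀,ψ;{ν_·};t,x₀,α̃)`. -/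
noncomputable def value (q : ℕ → S → (S → ℝ) → A → S → ℝ)
    (F : ℕ → S → (S → ℝ) → A → ℝ) (T₀ : ℕ) (ψ : S → (S → ℝ) → ℝ)
    (ν : ℕ → S → ℝ) (t : ℕ) (x₀ : S) : ℝ :=
  sInf { r : ℝ | ∃ αt : ℕ → S → A, r = cost q F T₀ ψ ν t x₀ αt }

/-- `α ∈ ℳ_state(T₀, ψ; t, μ)`: a state-dependent MFE for the game on `{t,…,T₀}` with
terminal cost `ψ`.  (Taking `T₀ = T`, `ψ = G` gives `ℳ_state(t,μ)`.) -/
def isMFE (q : ℕ → S → (S → ℝ) → A → S → ℝ) (F : ℕ → S → (S → ℝ) → A → ℝ)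
    (T₀ : ℕ) (ψ : S → (S → ℝ) → ℝ) (t : ℕ) (μ : S → ℝ) (α : ℕ → S → A) : Prop :=
  ∀ x, cost q F T₀ ψ (flow q α t μ) t x α = value q F T₀ ψ (flow q α t μ) t x

/-- Concatenation `α ⊕_{T₀} α'`. -/
def concat (T₀ : ℕ) (α α' : ℕ → S → A) : ℕ → S → A :=
  fun s x => if s < T₀ then α s x else α' s x

end MFGSetValue

open MFGSetValue

namespace MFGSetValue

variable {S A : Type*} [Fintype S] [DecidableEq S]

/-- The raw set value `𝕍₀(t,μ)` of the mean field game: the set of value functions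
`J(t,μ,α*;·,α*) : 𝕊 → ℝ` over all state-dependent MFE `α* ∈ ℳ_state(t,μ)`. -/
noncomputable def rawSetValue (q : ℕ → S → (S → ℝ) → A → S → ℝ)
    (F : ℕ → S → (S → ℝ) → A → ℝ) (G : S → (S → ℝ) → ℝ)
    (T : ℕ) (t : ℕ) (μ : S → ℝ) : Set (S → ℝ) :=
  { φ | ∃ α : ℕ → S → A, isMFE q F T G t μ α ∧
      φ = fun x => cost q F T G (flow q α t μ) t x α }

end MFGSetValue

/-!
Against a fixed measure flow, the cost of any strategy telescopes into the Bellman value plus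
the expected one-step Bellman gaps, which are nonnegative. Hence the value function is the
Bellman value, and, since `q > 0` lets the chain started at any state charge every later state,
a strategy is an equilibrium exactly when all its Bellman gaps on `[t, T)` vanish. This
optimality is local in time: it splits at `T₀` into optimality on `[T₀, T)` and optimality on
`[t, T₀)` against the Bellman value at `T₀` as terminal cost. An equilibrium restarted at `T₀`
keeps its flow, which gives one inclusion; for the other, the concatenation `α ⊕_{T₀} β` follows
the flow of `α` before `T₀` and that of `β` after, so it is optimal on both pieces.
-/

namespace MFGSetValue

variable {S A : Type*} [Fintype S]

section Probability

theorem isProb_indicator [DecidableEq S] (x₀ : S) :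
    IsProb fun x => if x = x₀ then (1 : ℝ) else 0 :=
  ⟨fun x => by by_cases h : x = x₀ <;> simp [h], by simp⟩

theorem IsProb.exists_pos {m : S → ℝ} (hm : IsProb m) : ∃ x, 0 < m x := by
  by_contra! h
  have hzero : ∑ x, m x = 0 := sum_eq_zero fun x _ => le_antisymm (h x) (hm.1 x)
  linarith [hm.2]

theorem IsProb.bind {m : S → ℝ} (hm : IsProb m) {k : S → S → ℝ} (hk : ∀ x, IsProb (k x)) :
    IsProb fun y => ∑ x, m x * k x y := by
  refine ⟨fun y => sum_nonneg fun x _ => mul_nonneg (hm.1 x) ((hk x).1 y), ?_⟩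
  simp only [sum_comm (γ := S) (f := fun y x => m x * k x y), ← mul_sum,
    (hk _).2, mul_one, hm.2]

theorem IsProb.bind_pos {m : S → ℝ} (hm : IsProb m) {k : S → S → ℝ}
    (hk : ∀ x y, 0 < k x y) (y : S) : 0 < ∑ x, m x * k x y := by
  obtain ⟨x₀, hx₀⟩ := hm.exists_pos
  exact sum_pos' (fun x _ => mul_nonneg (hm.1 x) (hk x y).le)
    ⟨x₀, mem_univ _, mul_pos hx₀ (hk x₀ y)⟩

theorem IsProb.sum_mul_le {m : S → ℝ} (hm : IsProb m) {f : S → ℝ} {c : ℝ}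
    (hf : ∀ x, f x ≤ c) : ∑ x, m x * f x ≤ c :=
  calc ∑ x, m x * f x ≤ ∑ x, m x * c :=
        sum_le_sum fun x _ => mul_le_mul_of_nonneg_left (hf x) (hm.1 x)
    _ = c := by rw [← sum_mul, hm.2, one_mul]

theorem IsProb.le_sum_mul {m : S → ℝ} (hm : IsProb m) {f : S → ℝ} {c : ℝ}
    (hf : ∀ x, c ≤ f x) : c ≤ ∑ x, m x * f x := by
  have := hm.sum_mul_le (f := fun x => -f x) (c := -c) fun x => neg_le_neg (hf x)
  simp only [mul_neg, sum_neg_distrib] at this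
  linarith

end Probability

section Flow

variable {q : ℕ → S → (S → ℝ) → A → S → ℝ}

theorem flow_succ (α : ℕ → S → A) (t : ℕ) (μ : S → ℝ) {s : ℕ} (hts : t ≤ s) :
    flow q α t μ (s + 1) = fun y => ∑ x, flow q α t μ s x * q s x (flow q α t μ s) (α s x) y := by
  rw [flow, if_neg (by omega)]

theorem flow_of_le (α : ℕ → S → A) {t : ℕ} (μ : S → ℝ) {s : ℕ} (hst : s ≤ t) :
    flow q α t μ s = μ := by
  cases s with
  | zero => rfl
  | succ s => rw [flow, if_pos hst]

theorem isProb_flow (hq : ∀ s x μ a, IsProb μ → IsProb (q s x μ a)) (α : ℕ → S → A) (t : ℕ)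
    {μ : S → ℝ} (hμ : IsProb μ) (s : ℕ) : IsProb (flow q α t μ s) := by
  induction s with
  | zero => exact hμ
  | succ s ih =>
    rcases lt_or_ge s t with hst | hts
    · rwa [flow_of_le α μ hst]
    · rw [flow_succ α t μ hts]
      exact ih.bind fun x => hq _ _ _ _ ih

theorem flow_congr {α α' : ℕ → S → A} (t : ℕ) (μ : S → ℝ) {s : ℕ}
    (h : ∀ r < s, α r = α' r) : flow q α t μ s = flow q α' t μ s := by
  induction s with
  | zero => rfl
  | succ s ih =>
    rw [flow, flow, ih fun r hr => h r (by omega), h s (by omega)]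

theorem flow_restart (α : ℕ → S → A) {t T₀ : ℕ} (μ : S → ℝ) (htT₀ : t ≤ T₀) {s : ℕ}
    (hs : T₀ ≤ s) : flow q α T₀ (flow q α t μ T₀) s = flow q α t μ s := by
  induction s, hs using Nat.le_induction with
  | base => exact flow_of_le α _ le_rfl
  | succ s hs ih => rw [flow_succ α _ _ hs, flow_succ α _ _ (htT₀.trans hs), ih]

omit [Fintype S] in
theorem concat_of_lt (α β : ℕ → S → A) {T₀ s : ℕ} (hs : s < T₀) : concat T₀ α β s = α s :=
  funext fun _ => if_pos hs

omit [Fintype S] in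
theorem concat_of_ge (α β : ℕ → S → A) {T₀ s : ℕ} (hs : T₀ ≤ s) : concat T₀ α β s = β s :=
  funext fun _ => if_neg (not_lt.mpr hs)

theorem flow_concat_of_le (α β : ℕ → S → A) {t T₀ : ℕ} (μ : S → ℝ) {s : ℕ} (hs : s ≤ T₀) :
    flow q (concat T₀ α β) t μ s = flow q α t μ s :=
  flow_congr t μ fun r hr => concat_of_lt α β (by omega)

theorem flow_concat_of_ge (α β : ℕ → S → A) {t T₀ : ℕ} (μ : S → ℝ) (htT₀ : t ≤ T₀) {s : ℕ}
    (hs : T₀ ≤ s) : flow q (concat T₀ α β) t μ s = flow q β T₀ (flow q α t μ T₀) s := by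
  induction s, hs using Nat.le_induction with
  | base => rw [flow_concat_of_le α β μ le_rfl, flow_of_le β _ le_rfl]
  | succ s hs ih =>
    rw [flow_succ _ _ _ (htT₀.trans hs), flow_succ β _ _ hs, ih, concat_of_ge α β hs]

end Flow

section Chain

variable [DecidableEq S] {q : ℕ → S → (S → ℝ) → A → S → ℝ} {ν : ℕ → S → ℝ} {α : ℕ → S → A}
  {t : ℕ} {x₀ : S}

theorem chain_of_le {s : ℕ} (hst : s ≤ t) :
    chain q ν α t x₀ s = fun x => if x = x₀ then 1 else 0 := by
  cases s with
  | zero => rfl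
  | succ s => rw [chain, if_pos hst]

theorem chain_succ {s : ℕ} (hts : t ≤ s) :
    chain q ν α t x₀ (s + 1) = fun y => ∑ x, chain q ν α t x₀ s x * q s x (ν s) (α s x) y := by
  rw [chain, if_neg (by omega)]

theorem sum_chain_succ_mul {s : ℕ} (hts : t ≤ s) (w : S → ℝ) :
    ∑ y, chain q ν α t x₀ (s + 1) y * w y =
      ∑ x, chain q ν α t x₀ s x * ∑ y, q s x (ν s) (α s x) y * w y := by
  simp only [chain_succ hts, sum_mul, mul_sum, mul_assoc]
  exact sum_comm

variable (hq : ∀ s x μ a, IsProb μ → IsProb (q s x μ a)) (hν : ∀ s, IsProb (ν s))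
include hq hν

theorem isProb_chain (s : ℕ) : IsProb (chain q ν α t x₀ s) := by
  induction s with
  | zero => exact isProb_indicator x₀
  | succ s ih =>
    rcases lt_or_ge s t with hst | hts
    · rw [chain_of_le hst]; exact isProb_indicator x₀
    · rw [chain_succ hts]; exact ih.bind fun x => hq _ _ _ _ (hν s)

theorem chain_start_pos (hq0 : ∀ s x μ a y, IsProb μ → 0 < q s x μ a y) {s : ℕ} (hts : t ≤ s) :
    0 < chain q ν α t x₀ s x₀ := by
  rcases hts.eq_or_lt with rfl | hts
  · simp [chain_of_le le_rfl]
  · obtain ⟨s, rfl⟩ : ∃ r, s = r + 1 := ⟨s - 1, by omega⟩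
    rw [chain_succ (by omega)]
    exact (isProb_chain hq hν s).bind_pos (fun x y => hq0 _ _ _ _ _ (hν s)) x₀

end Chain

section Bellman

variable (q : ℕ → S → (S → ℝ) → A → S → ℝ) (F : ℕ → S → (S → ℝ) → A → ℝ)

def stepCost (ν : ℕ → S → ℝ) (s : ℕ) (x : S) (a : A) (w : S → ℝ) : ℝ :=
  F s x (ν s) a + ∑ y, q s x (ν s) a y * w y

noncomputable def bellman (T₀ : ℕ) (g : S → ℝ) (ν : ℕ → S → ℝ) (s : ℕ) : S → ℝ :=
  if s < T₀ then fun x => ⨅ a, stepCost q F ν s x a (bellman T₀ g ν (s + 1)) else g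
termination_by T₀ - s

def IsBellmanOptimal (T₀ : ℕ) (g : S → ℝ) (ν : ℕ → S → ℝ) (t : ℕ) (α : ℕ → S → A) : Prop :=
  ∀ s ∈ Set.Ico t T₀, ∀ x,
    stepCost q F ν s x (α s x) (bellman q F T₀ g ν (s + 1)) = bellman q F T₀ g ν s x

variable {q F} {T₀ : ℕ} {g : S → ℝ} {ν : ℕ → S → ℝ}

theorem bellman_of_le {s : ℕ} (h : T₀ ≤ s) : bellman q F T₀ g ν s = g := by
  rw [bellman, if_neg (by omega)]

theorem bellman_of_lt {s : ℕ} (h : s < T₀) (x : S) :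
    bellman q F T₀ g ν s x = ⨅ a, stepCost q F ν s x a (bellman q F T₀ g ν (s + 1)) := by
  rw [bellman, if_pos h]

theorem bellman_congr {ν' : ℕ → S → ℝ} {s : ℕ} (h : Set.EqOn ν ν' (Set.Ico s T₀)) :
    bellman q F T₀ g ν s = bellman q F T₀ g ν' s := by
  by_cases hs : s < T₀
  · have hnext := bellman_congr (h.mono (Set.Ico_subset_Ico_left (Nat.le_succ s)))
    funext x
    rw [bellman_of_lt hs, bellman_of_lt hs, hnext]
    simp only [stepCost, h ⟨le_rfl, hs⟩]
  · rw [bellman_of_le (not_lt.mp hs), bellman_of_le (not_lt.mp hs)]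
termination_by T₀ - s

theorem bellman_nest {T : ℕ} (hT₀T : T₀ ≤ T) {s : ℕ} (hs : s ≤ T₀) :
    bellman q F T₀ (bellman q F T g ν T₀) ν s = bellman q F T g ν s := by
  rcases hs.eq_or_lt with rfl | hs
  · exact bellman_of_le le_rfl
  · funext x
    rw [bellman_of_lt hs, bellman_of_lt (hs.trans_le hT₀T), bellman_nest hT₀T hs]
termination_by T₀ - s

theorem bddBelow_range_stepCost (hq : ∀ s x μ a, IsProb μ → IsProb (q s x μ a))
    (hF : ∀ s x (μ : S → ℝ), BddBelow (Set.range fun a : A => F s x μ a))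
    {s : ℕ} (hν : IsProb (ν s)) (x : S) (w : S → ℝ) :
    BddBelow (Set.range fun a => stepCost q F ν s x a w) := by
  obtain ⟨c, hc⟩ := hF s x (ν s)
  refine ⟨c - ∑ y, |w y|, ?_⟩
  rintro _ ⟨a, rfl⟩
  have hw : ∀ y, -∑ z, |w z| ≤ w y := fun y =>
    (neg_le_neg (single_le_sum (fun z _ => abs_nonneg (w z)) (mem_univ y))).trans
      (neg_abs_le (w y))
  have := (hq s x _ a hν).le_sum_mul hw
  have := hc ⟨a, rfl⟩
  simp only [stepCost]
  linarith

theorem bellman_le_stepCost (hq : ∀ s x μ a, IsProb μ → IsProb (q s x μ a))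
    (hF : ∀ s x (μ : S → ℝ), BddBelow (Set.range fun a : A => F s x μ a))
    (hν : ∀ s, IsProb (ν s)) {s : ℕ} (hs : s < T₀) (x : S) (a : A) :
    bellman q F T₀ g ν s x ≤ stepCost q F ν s x a (bellman q F T₀ g ν (s + 1)) := by
  rw [bellman_of_lt hs]
  exact ciInf_le (bddBelow_range_stepCost hq hF (hν s) x _) a

theorem exists_stepCost_lt_bellman_add [Nonempty A] {s : ℕ} (hs : s < T₀) (x : S) {δ : ℝ}
    (hδ : 0 < δ) : ∃ a, stepCost q F ν s x a (bellman q F T₀ g ν (s + 1)) <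
      bellman q F T₀ g ν s x + δ := by
  rw [bellman_of_lt hs]
  exact exists_lt_of_ciInf_lt (lt_add_of_pos_right _ hδ)

end Bellman

section ValueFunction

variable [DecidableEq S] {q : ℕ → S → (S → ℝ) → A → S → ℝ} {F : ℕ → S → (S → ℝ) → A → ℝ}
  {T₀ : ℕ} {ψ : S → (S → ℝ) → ℝ} {ν : ℕ → S → ℝ} {t : ℕ} {x₀ : S} {α : ℕ → S → A}

theorem cost_eq_add_sum_gap (W : ℕ → S → ℝ) (hW : W T₀ = fun y => ψ y (ν T₀)) (htT₀ : t ≤ T₀) :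
    cost q F T₀ ψ ν t x₀ α = W t x₀ + ∑ s ∈ Ico t T₀, ∑ x, chain q ν α t x₀ s x *
      (stepCost q F ν s x (α s x) (W (s + 1)) - W s x) := by
  set E : ℕ → ℝ := fun s => ∑ x, chain q ν α t x₀ s x * W s x
  have hgap : ∀ s ∈ Ico t T₀, ∑ x, chain q ν α t x₀ s x *
      (stepCost q F ν s x (α s x) (W (s + 1)) - W s x) =
      ∑ x, chain q ν α t x₀ s x * F s x (ν s) (α s x) + (E (s + 1) - E s) := by
    intro s hs
    simp only [E, sum_chain_succ_mul (mem_Ico.mp hs).1, stepCost, mul_sub, mul_add,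
      sum_sub_distrib, sum_add_distrib, add_sub_assoc]
  have hE_start : E t = W t x₀ := by simp [E, chain_of_le le_rfl]
  have hE_end : E T₀ = ∑ x, chain q ν α t x₀ T₀ x * ψ x (ν T₀) := by simp only [E, hW]
  rw [sum_congr rfl hgap, sum_add_distrib, sum_Ico_sub E htT₀, hE_start, hE_end, cost]
  ring

variable (hq : ∀ s x μ a, IsProb μ → IsProb (q s x μ a))
  (hF : ∀ s x (μ : S → ℝ), BddBelow (Set.range fun a : A => F s x μ a))
  (hν : ∀ s, IsProb (ν s))
include hq hF hν

theorem bellman_le_cost (htT₀ : t ≤ T₀) (α : ℕ → S → A) :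
    bellman q F T₀ (fun y => ψ y (ν T₀)) ν t x₀ ≤ cost q F T₀ ψ ν t x₀ α := by
  rw [cost_eq_add_sum_gap _ (bellman_of_le le_rfl) htT₀, le_add_iff_nonneg_right]
  refine sum_nonneg fun s hs => (isProb_chain hq hν s).le_sum_mul fun x => ?_
  exact sub_nonneg.mpr (bellman_le_stepCost hq hF hν (mem_Ico.mp hs).2 x _)

omit hF in
theorem exists_cost_le_bellman_add [Nonempty A] (htT₀ : t ≤ T₀) {δ : ℝ} (hδ : 0 < δ) :
    ∃ α : ℕ → S → A, cost q F T₀ ψ ν t x₀ α ≤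
      bellman q F T₀ (fun y => ψ y (ν T₀)) ν t x₀ + ((T₀ - t : ℕ) : ℝ) * δ := by
  choose! α hα using fun s (hs : s < T₀) x =>
    exists_stepCost_lt_bellman_add (q := q) (F := F) (g := fun y => ψ y (ν T₀)) (ν := ν) hs x hδ
  refine ⟨α, ?_⟩
  rw [cost_eq_add_sum_gap _ (bellman_of_le le_rfl) htT₀, add_le_add_iff_left]
  calc _ ≤ ∑ _s ∈ Ico t T₀, δ := sum_le_sum fun s hs =>
          (isProb_chain hq hν s).sum_mul_le fun x => by linarith [hα s (mem_Ico.mp hs).2 x]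
    _ = ((T₀ - t : ℕ) : ℝ) * δ := by rw [sum_const, Nat.card_Ico, nsmul_eq_mul]

theorem value_eq_bellman [Nonempty A] (htT₀ : t ≤ T₀) :
    value q F T₀ ψ ν t x₀ = bellman q F T₀ (fun y => ψ y (ν T₀)) ν t x₀ := by
  have hlower : ∀ r ∈ {r | ∃ α : ℕ → S → A, r = cost q F T₀ ψ ν t x₀ α},
      bellman q F T₀ (fun y => ψ y (ν T₀)) ν t x₀ ≤ r := by
    rintro _ ⟨α, rfl⟩
    exact bellman_le_cost hq hF hν htT₀ α
  refine le_antisymm (le_of_forall_pos_le_add fun ε hε => ?_)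
    (le_csInf ⟨_, Classical.arbitrary _, rfl⟩ hlower)
  set N : ℝ := ((T₀ - t : ℕ) : ℝ)
  obtain ⟨α, hα⟩ := exists_cost_le_bellman_add (x₀ := x₀) hq hν htT₀
    (div_pos hε (by positivity : (0 : ℝ) < N + 1))
  have hNε : N * (ε / (N + 1)) ≤ ε :=
    calc N * (ε / (N + 1)) ≤ (N + 1) * (ε / (N + 1)) := by gcongr; exact (lt_add_one N).le
      _ = ε := mul_div_cancel₀ ε (by positivity)
  exact (csInf_le ⟨_, hlower⟩ ⟨α, rfl⟩).trans (hα.trans (add_le_add_right hNε _))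

omit hq hF hν in
theorem cost_eq_bellman (hopt : IsBellmanOptimal q F T₀ (fun y => ψ y (ν T₀)) ν t α)
    (htT₀ : t ≤ T₀) (x₀ : S) :
    cost q F T₀ ψ ν t x₀ α = bellman q F T₀ (fun y => ψ y (ν T₀)) ν t x₀ := by
  rw [cost_eq_add_sum_gap _ (bellman_of_le le_rfl) htT₀, add_eq_left]
  refine sum_eq_zero fun s hs => sum_eq_zero fun x _ => ?_
  rw [hopt s (mem_Ico.mp hs) x, sub_self, mul_zero]

/-- Each Bellman gap is charged with positive probability by the chain started at that very
state. -/
theorem isBellmanOptimal_of_cost_eq (hq0 : ∀ s x μ a y, IsProb μ → 0 < q s x μ a y)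
    (htT₀ : t ≤ T₀)
    (h : ∀ x₀, cost q F T₀ ψ ν t x₀ α = bellman q F T₀ (fun y => ψ y (ν T₀)) ν t x₀) :
    IsBellmanOptimal q F T₀ (fun y => ψ y (ν T₀)) ν t α := by
  intro s hs x
  set W := bellman q F T₀ (fun y => ψ y (ν T₀)) ν
  have hgap_nonneg : ∀ r ∈ Ico t T₀, ∀ y, 0 ≤ stepCost q F ν r y (α r y) (W (r + 1)) - W r y :=
    fun r hr y => sub_nonneg.mpr (bellman_le_stepCost hq hF hν (mem_Ico.mp hr).2 y _)
  have hsum := h x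
  rw [cost_eq_add_sum_gap W (bellman_of_le le_rfl) htT₀, add_eq_left,
    sum_eq_zero_iff_of_nonneg fun r hr => sum_nonneg fun y _ =>
      mul_nonneg ((isProb_chain hq hν r).1 y) (hgap_nonneg r hr y)] at hsum
  have hterm := (sum_eq_zero_iff_of_nonneg fun y _ => mul_nonneg ((isProb_chain hq hν s).1 y)
    (hgap_nonneg s (mem_Ico.mpr hs) y)).mp (hsum s (mem_Ico.mpr hs)) x (mem_univ x)
  have hpos : chain q ν α t x s x ≠ 0 := (chain_start_pos hq hν hq0 hs.1).ne'
  linarith [(mul_eq_zero.mp hterm).resolve_left hpos]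

theorem forall_cost_eq_value_iff (hq0 : ∀ s x μ a y, IsProb μ → 0 < q s x μ a y)
    (htT₀ : t ≤ T₀) :
    (∀ x, cost q F T₀ ψ ν t x α = value q F T₀ ψ ν t x) ↔
      IsBellmanOptimal q F T₀ (fun y => ψ y (ν T₀)) ν t α := by
  have hvalue : ∀ x, value q F T₀ ψ ν t x = bellman q F T₀ (fun y => ψ y (ν T₀)) ν t x :=
    fun x => have : Nonempty A := ⟨α t x⟩; value_eq_bellman hq hF hν htT₀
  simp only [hvalue]
  exact ⟨isBellmanOptimal_of_cost_eq hq hF hν hq0 htT₀, fun hopt => cost_eq_bellman hopt htT₀⟩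

end ValueFunction

section Equilibria

variable {q : ℕ → S → (S → ℝ) → A → S → ℝ} {F : ℕ → S → (S → ℝ) → A → ℝ}

theorem IsBellmanOptimal.congr {T₀ : ℕ} {g : S → ℝ} {ν ν' : ℕ → S → ℝ} {t : ℕ}
    {α α' : ℕ → S → A} (h : IsBellmanOptimal q F T₀ g ν t α)
    (hν : Set.EqOn ν ν' (Set.Ico t T₀)) (hα : Set.EqOn α α' (Set.Ico t T₀)) :
    IsBellmanOptimal q F T₀ g ν' t α' := by
  intro s hs x
  obtain ⟨hts, hsT₀⟩ := hs
  have hW : ∀ r, t ≤ r → bellman q F T₀ g ν r = bellman q F T₀ g ν' r :=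
    fun r hr => bellman_congr (hν.mono (Set.Ico_subset_Ico_left hr))
  rw [← hW s hts, ← hW (s + 1) (by omega), ← h s ⟨hts, hsT₀⟩ x, ← hα ⟨hts, hsT₀⟩]
  simp only [stepCost, hν ⟨hts, hsT₀⟩]

theorem isBellmanOptimal_split {t T₀ T : ℕ} {g : S → ℝ} {ν : ℕ → S → ℝ} {α : ℕ → S → A}
    (htT₀ : t ≤ T₀) (hT₀T : T₀ ≤ T) :
    IsBellmanOptimal q F T g ν t α ↔
      IsBellmanOptimal q F T₀ (bellman q F T g ν T₀) ν t α ∧ IsBellmanOptimal q F T g ν T₀ α := by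
  have hnest : ∀ s ∈ Set.Ico t T₀, ∀ x,
      stepCost q F ν s x (α s x) (bellman q F T₀ (bellman q F T g ν T₀) ν (s + 1)) =
        bellman q F T₀ (bellman q F T g ν T₀) ν s x ↔
      stepCost q F ν s x (α s x) (bellman q F T g ν (s + 1)) = bellman q F T g ν s x :=
    fun s hs x => by rw [bellman_nest hT₀T hs.2, bellman_nest hT₀T hs.2.le]
  refine ⟨fun h => ⟨fun s hs x => (hnest s hs x).mpr (h s ⟨hs.1, hs.2.trans_le hT₀T⟩ x),
    fun s hs x => h s ⟨htT₀.trans hs.1, hs.2⟩ x⟩, fun ⟨hhead, htail⟩ s hs x => ?_⟩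
  rcases lt_or_ge s T₀ with hsT₀ | hT₀s
  · exact (hnest s ⟨hs.1, hsT₀⟩ x).mp (hhead s ⟨hs.1, hsT₀⟩ x)
  · exact htail s ⟨hT₀s, hs.2⟩ x

variable [DecidableEq S]

def rawSetValueDPP (q : ℕ → S → (S → ℝ) → A → S → ℝ) (F : ℕ → S → (S → ℝ) → A → ℝ)
    (G : S → (S → ℝ) → ℝ) (T T₀ t : ℕ) (μ : S → ℝ) : Set (S → ℝ) :=
  { φ | ∃ (ψ : S → (S → ℝ) → ℝ) (α : ℕ → S → A),
      (fun y => ψ y (flow q α t μ T₀)) ∈ rawSetValue q F G T T₀ (flow q α t μ T₀) ∧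
      isMFE q F T₀ ψ t μ α ∧
      φ = fun x => cost q F T₀ ψ (flow q α t μ) t x α }

variable (hq : ∀ s x μ a, IsProb μ → IsProb (q s x μ a))
  (hq0 : ∀ s x μ a y, IsProb μ → 0 < q s x μ a y)
  (hF : ∀ s x (μ : S → ℝ), BddBelow (Set.range fun a : A => F s x μ a))
include hq hq0 hF

theorem isMFE_iff {T₀ : ℕ} {ψ : S → (S → ℝ) → ℝ} {t : ℕ} {μ : S → ℝ} {α : ℕ → S → A}
    (hμ : IsProb μ) (htT₀ : t ≤ T₀) :
    isMFE q F T₀ ψ t μ α ↔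
      IsBellmanOptimal q F T₀ (fun y => ψ y (flow q α t μ T₀)) (flow q α t μ) t α :=
  forall_cost_eq_value_iff hq hF (isProb_flow hq α t hμ) hq0 htT₀

variable {G : S → (S → ℝ) → ℝ} {T t T₀ : ℕ} {μ : S → ℝ}

theorem rawSetValue_subset_rawSetValueDPP (htT₀ : t ≤ T₀) (hT₀T : T₀ ≤ T) (hμ : IsProb μ) :
    rawSetValue q F G T t μ ⊆ rawSetValueDPP q F G T T₀ t μ := by
  rintro _ ⟨α, hα, rfl⟩
  set ν := flow q α t μ
  set W := bellman q F T (fun y => G y (ν T)) ν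
  rw [isMFE_iff hq hq0 hF hμ (htT₀.trans hT₀T)] at hα
  obtain ⟨hhead, htail⟩ := (isBellmanOptimal_split htT₀ hT₀T).mp hα
  have hrestart : Set.EqOn ν (flow q α T₀ (ν T₀)) (Set.Ici T₀) :=
    fun s hs => (flow_restart α μ htT₀ hs).symm
  have htail' : IsBellmanOptimal q F T (fun y => G y (flow q α T₀ (ν T₀) T))
      (flow q α T₀ (ν T₀)) T₀ α := by
    rw [flow_restart α μ htT₀ hT₀T]
    exact htail.congr (hrestart.mono Set.Ico_subset_Ici_self) (Set.eqOn_refl _ _)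
  refine ⟨fun y _ => W T₀ y, α, ⟨α, (isMFE_iff hq hq0 hF (isProb_flow hq α t hμ T₀) hT₀T).mpr
    htail', ?_⟩, (isMFE_iff hq hq0 hF hμ htT₀).mpr hhead, ?_⟩
  · funext x
    rw [cost_eq_bellman htail' hT₀T, flow_restart α μ htT₀ hT₀T,
      ← bellman_congr (hrestart.mono Set.Ico_subset_Ici_self)]
  · funext x
    rw [cost_eq_bellman hα (htT₀.trans hT₀T), cost_eq_bellman hhead htT₀, bellman_nest hT₀T htT₀]

theorem rawSetValueDPP_subset_rawSetValue (htT₀ : t ≤ T₀) (hT₀T : T₀ ≤ T) (hμ : IsProb μ) :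
    rawSetValueDPP q F G T T₀ t μ ⊆ rawSetValue q F G T t μ := by
  rintro _ ⟨ψ, α, ⟨β, hβ, hψ⟩, hα, rfl⟩
  set ν := flow q α t μ
  set νβ := flow q β T₀ (ν T₀)
  set α' := concat T₀ α β
  set ν' := flow q α' t μ
  rw [isMFE_iff hq hq0 hF (isProb_flow hq α t hμ T₀) hT₀T] at hβ
  rw [isMFE_iff hq hq0 hF hμ htT₀] at hα
  have hhead : Set.EqOn ν ν' (Set.Iio T₀) := fun s hs => (flow_concat_of_le α β μ hs.le).symm
  have htail : Set.EqOn νβ ν' (Set.Ici T₀) := fun s hs => (flow_concat_of_ge α β μ htT₀ hs).symm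
  have hterminal : (fun y => G y (νβ T)) = fun y => G y (ν' T) := by rw [htail hT₀T]
  have hvalue : bellman q F T (fun y => G y (ν' T)) ν' T₀ = fun y => ψ y (ν T₀) := by
    rw [← hterminal, ← bellman_congr (htail.mono Set.Ico_subset_Ici_self), hψ]
    exact funext fun x => (cost_eq_bellman hβ hT₀T x).symm
  have hopt : IsBellmanOptimal q F T (fun y => G y (ν' T)) ν' t α' := by
    refine (isBellmanOptimal_split htT₀ hT₀T).mpr ⟨?_, ?_⟩
    · rw [hvalue]
      exact hα.congr (hhead.mono Set.Ico_subset_Iio_self)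
        fun s hs => (concat_of_lt α β hs.2).symm
    · rw [← hterminal]
      exact hβ.congr (htail.mono Set.Ico_subset_Ici_self) fun s hs => (concat_of_ge α β hs.1).symm
  refine ⟨α', (isMFE_iff hq hq0 hF hμ (htT₀.trans hT₀T)).mpr hopt, funext fun x => ?_⟩
  rw [cost_eq_bellman hα htT₀, cost_eq_bellman hopt (htT₀.trans hT₀T), ← bellman_nest hT₀T htT₀,
    hvalue, bellman_congr (hhead.mono Set.Ico_subset_Iio_self)]

end Equilibria

end MFGSetValue

theorem raw_set_value_DPP_general
    {S A : Type*} [Fintype S] [DecidableEq S]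
    (T : ℕ) (q : ℕ → S → (S → ℝ) → A → S → ℝ)
    (F : ℕ → S → (S → ℝ) → A → ℝ) (G : S → (S → ℝ) → ℝ)
    (hq0 : ∀ s x μ a y, IsProb μ → 0 < q s x μ a y)
    (hqsum : ∀ s x μ a, IsProb μ → ∑ y, q s x μ a y = 1)
    (hF : ∀ s x (μ : S → ℝ), BddBelow (Set.range fun a : A => F s x μ a))
    (t T₀ : ℕ) (htT₀ : t < T₀) (hT₀T : T₀ ≤ T)
    (μ : S → ℝ) (hμ : IsProb μ) :
    rawSetValue q F G T t μ =
      { φ | ∃ (ψ : S → (S → ℝ) → ℝ) (α : ℕ → S → A),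
          (fun y => ψ y (flow q α t μ T₀)) ∈ rawSetValue q F G T T₀ (flow q α t μ T₀) ∧
          isMFE q F T₀ ψ t μ α ∧
          φ = fun x => cost q F T₀ ψ (flow q α t μ) t x α } := by
  have hq : ∀ s x μ a, IsProb μ → IsProb (q s x μ a) :=
    fun s x μ a hμ => ⟨fun y => (hq0 s x μ a y hμ).le, hqsum s x μ a hμ⟩
  exact (rawSetValue_subset_rawSetValueDPP hq hq0 hF htT₀.le hT₀T hμ).antisymm
    (rawSetValueDPP_subset_rawSetValue hq hq0 hF htT₀.le hT₀T hμ)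

/-- Theorem 2.4, DPP for the raw set value.  For `0 ≤ t < T₀ ≤ T` and
`μ ∈ 𝒫₀(𝕊)`,
`𝕍₀(t,μ) = { J(T₀,ψ;t,μ,α*;·,α*) : ψ : 𝕊×𝒫₀(𝕊) → ℝ, α* ∈ 𝒜_state` such that
`ψ(·,μ^{α*}_{T₀}) ∈ 𝕍₀(T₀,μ^{α*}_{T₀})` and `α* ∈ ℳ_state(T₀,ψ;t,μ) }`. -/
theorem raw_set_value_DPP
    {S A : Type*} [Fintype S] [DecidableEq S] [Nonempty A]
    (T : ℕ) (q : ℕ → S → (S → ℝ) → A → S → ℝ)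
    (F : ℕ → S → (S → ℝ) → A → ℝ) (G : S → (S → ℝ) → ℝ)
    (hq0 : ∀ s x μ a y, IsProb μ → 0 < q s x μ a y)
    (hq1 : ∀ s x μ a y, IsProb μ → q s x μ a y < 1)
    (hqsum : ∀ s x μ a, IsProb μ → ∑ y, q s x μ a y = 1)
    (hF : ∀ s x (μ : S → ℝ), BddBelow (Set.range fun a : A => F s x μ a))
    (t T₀ : ℕ) (htT₀ : t < T₀) (hT₀T : T₀ ≤ T)
    (μ : S → ℝ) (hμ : IsProb μ) (hμfull : ∀ x, 0 < μ x) :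
    rawSetValue q F G T t μ =
      { φ | ∃ (ψ : S → (S → ℝ) → ℝ) (α : ℕ → S → A),
          (fun y => ψ y (flow q α t μ T₀)) ∈ rawSetValue q F G T T₀ (flow q α t μ T₀) ∧
          isMFE q F T₀ ψ t μ α ∧
          φ = fun x => cost q F T₀ ψ (flow q α t μ) t x α } :=
  raw_set_value_DPP_general T q F G hq0 hqsum hF t T₀ htT₀ hT₀T μ hμ
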